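/- Let n ≥ 1, let p be a prime, let T = (V,E) be the complete binary tree of height n with leaf set L and root root, and let σ : L → Z/pZ and t ∈ Z/pZ. Then the PSP instance P(n,p,σ,t) is a positive instance of the path systems problem — i.e. the target (root, t) lies in the upward closure of S — if and only if t = Σ_{l ∈ L} σ(l) (sum in Z/pZ). -/

import Mathlib

/-!
Vertices of the complete rooted binary tree of height `n` are modelled as
binary strings (lists of booleans) of length at most `n`: the root is the empty
list, and the two children of a vertex `x` (when `x.length < n`) are
`x ++ [true]` and `x ++ [false]`.  Leaves are the strings of length exactly `n`
and the height of a vertex is its distance to the leaves below it.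
-/

/-- The ambient type of tree vertices: binary strings. -/
abbrev V : Type := List Bool

/-- The vertex set of the complete binary tree of height `n`. -/
def treeSet (n : ℕ) : Set V := {l : V | l.length ≤ n}

/-- The height of a vertex: its distance to the leaves below it. -/
def hgt (n : ℕ) (v : V) : ℕ := n - v.length

/-- A set `X` is closed if, whenever two elements of a related triple
(a parent together with its two children) belong to `X`, so does the third. -/
def TripleClosed (n : ℕ) (X : Set V) : Prop :=
  ∀ x : V, x.length < n →
    ((x ∈ X → x ++ [true] ∈ X → x ++ [false] ∈ X) ∧
     (x ∈ X → x ++ [false] ∈ X → x ++ [true] ∈ X) ∧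
     (x ++ [true] ∈ X → x ++ [false] ∈ X → x ∈ X))

/-- The closure of `X`: the smallest closed subset of the tree containing `X`. -/
def cl (n : ℕ) (X : Set V) : Set V :=
  ⋂₀ {Y : Set V | X ⊆ Y ∧ Y ⊆ treeSet n ∧ TripleClosed n Y}

/-- `min-h(X)`: the minimum height of an element of `X`. -/
noncomputable def minh (n : ℕ) (X : Set V) : ℕ := sInf (hgt n '' X)

/-- `z` lies on the unique undirected path between `x` and `y`:
`z` is an ancestor of `x` or of `y`, and the longest common prefix of
`x` and `y` is an ancestor of `z`. -/
def OnPath (x y z : V) : Prop :=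
  (z <+: x ∨ z <+: y) ∧ ∀ w : V, w <+: x → w <+: y → w <+: z

/-- `X` is connected: it contains the undirected path between any two of its elements. -/
def Conn (X : Set V) : Prop :=
  ∀ x ∈ X, ∀ y ∈ X, ∀ z : V, OnPath x y z → z ∈ X

/-- `F` encloses `v`: every path from `v` down to a leaf contains an element of `F`. -/
def Encloses (n : ℕ) (F : Set V) (v : V) : Prop :=
  ∀ l : V, l.length = n → v <+: l → ∃ z ∈ F, v <+: z ∧ z <+: l

/-- `F` minimally encloses `v`. -/
def MinEncloses (n : ℕ) (F : Set V) (v : V) : Prop :=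
  Encloses n F v ∧ ∀ F' : Set V, F' ⊂ F → ¬ Encloses n F' v

/-- `r` is the head of `X`: an element of `X` of maximum height. -/
def IsHead (n : ℕ) (X : Set V) (r : V) : Prop :=
  r ∈ X ∧ ∀ y ∈ X, hgt n y ≤ hgt n r

/-- `Fr` is the frontier of the closed connected set `S` with head `x`:
`Fr ⊆ S` minimally encloses `x` and `S` consists exactly of the vertices lying
on the directed path from `x` to some element of `Fr`. -/
def IsFrontier (n : ℕ) (S Fr : Set V) (x : V) : Prop :=
  Fr ⊆ S ∧ MinEncloses n Fr x ∧ S = {z : V | ∃ f ∈ Fr, x <+: z ∧ z <+: f}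

/-- The upward closure of a set `X` with respect to a ternary relation `R`:
the smallest superset `Y` of `X` such that whenever `a ∈ Y`, `b ∈ Y` and
`(a,b,c) ∈ R`, also `c ∈ Y`. -/
inductive UpClosure {U : Type*} (R : U → U → U → Prop) (X : Set U) : U → Prop
  | base : ∀ {x : U}, x ∈ X → UpClosure R X x
  | step : ∀ {a b c : U}, UpClosure R X a → UpClosure R X b → R a b c →
      UpClosure R X c

/-- The ternary relation of the PSP instance `P(n,p,σ,t)`:
`((u,a),(v,b),(w,c)) ∈ R` iff `a + b = c` in `Z/pZ` and `u` and `v` are the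
two children of `w` in the complete binary tree of height `n`. -/
def pspR (n p : ℕ) : (V × ZMod p) → (V × ZMod p) → (V × ZMod p) → Prop :=
  fun x y z =>
    x.2 + y.2 = z.2 ∧ z.1.length < n ∧
    ((x.1 = z.1 ++ [true] ∧ y.1 = z.1 ++ [false]) ∨
     (x.1 = z.1 ++ [false] ∧ y.1 = z.1 ++ [true]))

/-- The source set `S = {(l, σ(l)) : l a leaf}` of the PSP instance. -/
def pspS (n p : ℕ) (σ : V → ZMod p) : Set (V × ZMod p) :=
  {x : V × ZMod p | x.1.length = n ∧ x.2 = σ x.1}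

/-!
Label each vertex `v` with the sum `leafSum n σ v` of `σ` over the leaves below it. The
relation of the instance is exactly the recursion expressing this label as the sum of the
labels of the two children, and the sources are the leaves with their own labels. Hence every
derivable pair is `(v, leafSum n σ v)`, and conversely each such pair is derived bottom-up.
-/

def leavesBelow (n : ℕ) (v : V) : Set V := {l : V | l.length = n ∧ v <+: l}

noncomputable def leafSum (n : ℕ) {M : Type*} [AddCommMonoid M] (σ : V → M) (v : V) : M :=
  ∑ᶠ l ∈ leavesBelow n v, σ l

lemma leavesBelow_finite (n : ℕ) (v : V) : (leavesBelow n v).Finite :=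
  (List.finite_length_eq Bool n).subset fun _ h => h.1

lemma leavesBelow_nil (n : ℕ) : leavesBelow n [] = {l : V | l.length = n} := by
  ext l; simp [leavesBelow]

lemma leavesBelow_of_length_eq {n : ℕ} {v : V} (hv : v.length = n) :
    leavesBelow n v = {v} := by
  ext l
  constructor
  · rintro ⟨hl, hvl⟩
    exact (hvl.eq_of_length (hv.trans hl.symm)).symm
  · rintro rfl
    exact ⟨hv, List.prefix_refl _⟩

lemma leavesBelow_eq_union {n : ℕ} {v : V} (hv : v.length < n) :
    leavesBelow n v = leavesBelow n (v ++ [true]) ∪ leavesBelow n (v ++ [false]) := by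
  ext l
  constructor
  · rintro ⟨hl, r, rfl⟩
    cases r with
    | nil => rw [List.append_nil] at hl; omega
    | cons b r =>
      cases b
      · exact Or.inr ⟨hl, r, by simp⟩
      · exact Or.inl ⟨hl, r, by simp⟩
  · rintro (⟨hl, hvl⟩ | ⟨hl, hvl⟩)
    · exact ⟨hl, (v.prefix_append _).trans hvl⟩
    · exact ⟨hl, (v.prefix_append _).trans hvl⟩

lemma disjoint_leavesBelow_true_false (n : ℕ) (v : V) :
    Disjoint (leavesBelow n (v ++ [true])) (leavesBelow n (v ++ [false])) := by
  rw [Set.disjoint_left]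
  rintro l ⟨_, htrue⟩ ⟨_, hfalse⟩
  have := (List.prefix_of_prefix_length_le htrue hfalse (by simp)).eq_of_length (by simp)
  simp at this

section leafSum

variable {n : ℕ} {M : Type*} [AddCommMonoid M] (σ : V → M)

lemma leafSum_of_length_eq {v : V} (hv : v.length = n) : leafSum n σ v = σ v := by
  rw [leafSum, leavesBelow_of_length_eq hv, finsum_mem_singleton]

lemma leafSum_eq_add {v : V} (hv : v.length < n) :
    leafSum n σ v = leafSum n σ (v ++ [true]) + leafSum n σ (v ++ [false]) := by
  rw [leafSum, leavesBelow_eq_union hv, finsum_mem_union (disjoint_leavesBelow_true_false n v)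
    (leavesBelow_finite n _) (leavesBelow_finite n _)]
  rfl

lemma leafSum_nil : leafSum n σ [] = ∑ᶠ l ∈ {l : V | l.length = n}, σ l := by
  rw [leafSum, leavesBelow_nil]

end leafSum

section psp

variable {n p : ℕ} (σ : V → ZMod p)

lemma eq_leafSum_of_upClosure {x : V × ZMod p} (hx : UpClosure (pspR n p) (pspS n p σ) x) :
    x.2 = leafSum n σ x.1 := by
  induction hx with
  | base hx => exact hx.2.trans (leafSum_of_length_eq σ hx.1).symm
  | step _ _ hr iha ihb =>
    obtain ⟨hsum, hlen, hchildren⟩ := hr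
    rw [leafSum_eq_add σ hlen, ← hsum, iha, ihb]
    rcases hchildren with ⟨ha, hb⟩ | ⟨ha, hb⟩ <;> rw [ha, hb]
    exact add_comm _ _

lemma upClosure_leafSum {v : V} (hv : v.length ≤ n) :
    UpClosure (pspR n p) (pspS n p σ) (v, leafSum n σ v) := by
  obtain ⟨k, hk⟩ := Nat.exists_eq_add_of_le hv
  induction k generalizing v with
  | zero => exact .base ⟨hk.symm, leafSum_of_length_eq σ hk.symm⟩
  | succ k ih =>
    have hlt : v.length < n := by omega
    have hchild (b : Bool) :
        UpClosure (pspR n p) (pspS n p σ) (v ++ [b], leafSum n σ (v ++ [b])) :=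
      ih (by simp; omega) (by simp; omega)
    rw [leafSum_eq_add σ hlt]
    exact .step (hchild true) (hchild false) ⟨rfl, hlt, .inl ⟨rfl, rfl⟩⟩

end psp

theorem stmt_10_general (n p : ℕ) (σ : V → ZMod p)
    (t : ZMod p) :
    UpClosure (pspR n p) (pspS n p σ) (([] : List Bool), t) ↔
      t = ∑ᶠ l ∈ {l : V | l.length = n}, σ l := by
  rw [← leafSum_nil]
  constructor
  · exact eq_leafSum_of_upClosure σ
  · rintro rfl
    exact upClosure_leafSum σ (Nat.zero_le n)

/-- the PSP instance `P(n,p,σ,t)` is a positive instance of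
the path systems problem, i.e. the target `(root, t)` lies in the upward
closure of `S`, iff `t = Σ_{l ∈ L} σ(l)`. -/
theorem stmt_10 (n p : ℕ) (hn : 1 ≤ n) (hp : p.Prime) (σ : V → ZMod p)
    (t : ZMod p) :
    UpClosure (pspR n p) (pspS n p σ) (([] : List Bool), t) ↔
      t = ∑ᶠ l ∈ {l : V | l.length = n}, σ l :=
  stmt_10_general n p σ t
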